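/- A weak higher dimensional transition system X is a higher dimensional transition system (i.e. satisfies CSA1 and the Unique intermediate state axiom) if and only if X is orthogonal to the canonical morphisms D[a] → C_1[a] for all a ∈ Σ and to the inclusions C_n[a_1,…,a_n]^ext ⊆ C_n[a_1,…,a_n] for all n ≥ 2 and a_1,…,a_n ∈ Σ. -/

import Mathlib

variable {S L Λ : Type*}

/-- The Multiset axiom: the set of transitions is closed under permutations of
the list of actions. -/
def MultisetAxiom (T : S → List L → S → Prop) : Prop :=
  ∀ (α β : S) (l l' : List L), l.Perm l' → T α l β → T α l' β

/-- The Coherence axiom. -/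
def CoherenceAxiom (T : S → List L → S → Prop) : Prop :=
  ∀ (α β ν₁ ν₂ : S) (l₁ l₂ l₃ : List L), l₁ ≠ [] → l₂ ≠ [] → l₃ ≠ [] →
    T α (l₁ ++ l₂ ++ l₃) β → T α l₁ ν₁ → T ν₁ (l₂ ++ l₃) β →
    T α (l₁ ++ l₂) ν₂ → T ν₂ l₃ β → T ν₁ l₂ ν₂

/-- The first Cattani-Sassone axiom. -/
def CSA1 (μ : L → Λ) (T : S → List L → S → Prop) : Prop :=
  ∀ (α β : S) (u u' : L), T α [u] β → T α [u'] β → μ u = μ u' → u = u'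

/-- The Unique intermediate state axiom. -/
def UniqueIntermediate (T : S → List L → S → Prop) : Prop :=
  ∀ (α β : S) (l₁ l₂ : List L), l₁ ≠ [] → l₂ ≠ [] → T α (l₁ ++ l₂) β →
    ∃! ν, T α l₁ ν ∧ T ν l₂ β
universe u u1 u2 u3 u4 u5 u6

/-- A transition structure over the set of labels `Λ`: a set of states `S`, a
set of actions `L`, a labelling map `μ : L → Λ`, and a set of transitions
`(α, u_1, …, u_n, β)` encoded as `T α [u_1, …, u_n] β`. Weak higher dimensional
transition systems are the transition structures whose transitions have
nonempty lists of actions and satisfying the Multiset and Coherence axioms. -/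
structure TransSys (Λ : Type u) where
  /-- the states -/
  S : Type u1
  /-- the actions -/
  L : Type u2
  /-- the labelling map -/
  μ : L → Λ
  /-- the transitions -/
  T : S → List L → S → Prop

/-- A morphism of (weak higher dimensional) transition systems: a pair of set
maps on states and actions commuting with the labelling maps and taking
transitions to transitions. -/
structure TransSys.Hom {Λ : Type u} (X : TransSys.{u, u1, u2} Λ)
    (Y : TransSys.{u, u3, u4} Λ) where
  /-- the map on states -/
  f0 : X.S → Y.S
  /-- the map on actions -/
  fa : X.L → Y.L
  label : ∀ x, Y.μ (fa x) = X.μ x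
  map : ∀ (α : X.S) (l : List X.L) (β : X.S), X.T α l β → Y.T (f0 α) (l.map fa) (f0 β)

/-- Composition of morphisms of transition systems. -/
def TransSys.Hom.comp {Λ : Type u} {X : TransSys.{u, u1, u2} Λ}
    {Y : TransSys.{u, u3, u4} Λ} {Z : TransSys.{u, u5, u6} Λ}
    (g : Y.Hom Z) (f : X.Hom Y) : X.Hom Z where
  f0 := fun x => g.f0 (f.f0 x)
  fa := fun x => g.fa (f.fa x)
  label := fun x => (g.label (f.fa x)).trans (f.label x)
  map := fun α l β h => by
    have h2 := g.map _ _ _ (f.map α l β h)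
    rw [List.map_map] at h2
    exact h2

/-- The set of transitions of the cube `C_n[a_1,…,a_n]`: the states are the
elements of `{0,1}^n`, the actions are the indices `i ∈ {1,…,n}` (the action
`i` standing for the pair `(a_i, i)`, labelled by `a_i`). -/
@[reducible] def CubeT (n : ℕ) (ε : Fin n → Bool) (l : List (Fin n)) (ε' : Fin n → Bool) :
    Prop :=
  l ≠ [] ∧ l.Nodup ∧ (∀ i, ε i ≤ ε' i) ∧ ∀ i : Fin n, ε i ≠ ε' i ↔ i ∈ l

/-- The cube `C_n[a_1,…,a_n]` as a (weak higher dimensional) transition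
system. -/
@[reducible] def cube {Λ : Type u} (n : ℕ) (a : Fin n → Λ) : TransSys.{u, 0, 0} Λ where
  S := Fin n → Bool
  L := Fin n
  μ := a
  T := CubeT n
/-- The sub-system `C_n[a_1,…,a_n]^ext`: its states are `0_n` and `1_n`, its
actions are those of the cube, and its transitions are the tuples
`(0_n, (a_{σ(1)},σ(1)), …, (a_{σ(n)},σ(n)), 1_n)` for `σ` a permutation of
`{1,…,n}`, i.e. the nonempty lists of indices without repetition containing
every index. -/
@[reducible] def cubeExt {Λ : Type u} (n : ℕ) (a : Fin n → Λ) : TransSys.{u, 0, 0} Λ where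
  S := {ε : Fin n → Bool // ε = (fun _ => false) ∨ ε = (fun _ => true)}
  L := Fin n
  μ := a
  T := fun x l y => x.1 = (fun _ => false) ∧ y.1 = (fun _ => true) ∧
    l ≠ [] ∧ l.Nodup ∧ ∀ i : Fin n, i ∈ l

/-- The inclusion `C_n[a_1,…,a_n]^ext ⊆ C_n[a_1,…,a_n]`. -/
def extIncl {Λ : Type u} (n : ℕ) (a : Fin n → Λ) : (cubeExt n a).Hom (cube n a) where
  f0 := Subtype.val
  fa := id
  label := fun _ => rfl
  map := fun x l y h => by
    obtain ⟨hx, hy, hne, hnd, hall⟩ := h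
    rw [List.map_id, hx, hy]
    exact ⟨hne, hnd, fun i => by simp, fun i => by simpa using hall i⟩
/-- The weak higher dimensional transition system `D[a]`: two states `0` and
`1` (encoded by `false` and `true`), two actions `(a,1)` and `(a,2)` (encoded
by `false` and `true`) both labelled by `a`, and the two transitions
`(0,(a,1),1)` and `(0,(a,2),1)`. -/
@[reducible] def dSys {Λ : Type u} (a : Λ) : TransSys.{u, 0, 0} Λ where
  S := Bool
  L := Bool
  μ := fun _ => a
  T := fun α l β => α = false ∧ β = true ∧ (l = [false] ∨ l = [true])

/-- The canonical morphism `D[a] → C_1[a]`: the identity on states, sending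
both actions to the unique action `(a,1)` of `C_1[a]`. -/
def dToC {Λ : Type u} (a : Λ) : (dSys a).Hom (cube 1 (fun _ => a)) where
  f0 := fun b _ => b
  fa := fun _ => 0
  label := fun _ => rfl
  map := fun α l β h => by
    obtain ⟨hα, hβ, hl⟩ := h
    subst hα; subst hβ
    have hmap : l.map (fun _ : Bool => (0 : Fin 1)) = [0] := by
      rcases hl with h | h <;> subst h <;> rfl
    rw [hmap]
    exact ⟨by simp, by simp, fun i => by simp, fun i => by simp [Fin.eq_zero i]⟩


/-!
A morphism out of the cube `C_n[a]` is determined by its actions and its vertices, and the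
image of the vertex `ε` must be an intermediate state splitting the image `α → β` of the
diagonal into the actions on the coordinates where `ε` is `1`, followed by the others.
Conversely, by the Multiset and Coherence axioms, any choice of such splitting states gives a
morphism: a cube transition `ε → ε'` is the middle part of a three-fold split of the diagonal.
Hence lifts along `C_n^ext ⊆ C_n` exist and are unique exactly when the intermediate states of
splits exist and are unique, while lifts along `D[a] → C_1[a]` exist exactly when parallel
1-transitions with the same label coincide.
-/

-- Vertices of `C_n` are ordered pointwise: `⊥ = 0_n`, `⊤ = 1_n`, and `εᶜ` is the opposite vertex.
def trueIdx {n : ℕ} (ε : Fin n → Bool) : List (Fin n) := (List.finRange n).filter ε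

section Cube

variable {n : ℕ} {ε ε' : Fin n → Bool} {l : List (Fin n)}

@[simp]
theorem mem_trueIdx {i : Fin n} : i ∈ trueIdx ε ↔ ε i = true := by
  simp [trueIdx]

theorem nodup_trueIdx : (trueIdx ε).Nodup :=
  (List.nodup_finRange n).filter _

@[simp]
theorem trueIdx_bot : trueIdx (⊥ : Fin n → Bool) = [] := by
  simp [trueIdx]

theorem trueIdx_ne_nil (h : ε ≠ ⊥) : trueIdx ε ≠ [] := by
  obtain ⟨i, hi⟩ : ∃ i, ε i ≠ false := by
    by_contra! hc
    exact h (funext hc)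
  exact List.ne_nil_of_mem (mem_trueIdx.2 (by simpa using hi))

theorem CubeT.ne (h : CubeT n ε l ε') : ε ≠ ε' := by
  obtain ⟨i, hi⟩ := List.exists_mem_of_ne_nil l h.1
  exact fun he => (h.2.2.2 i).2 hi (congrFun he i)

theorem CubeT.compl (h : CubeT n ε l ε') : CubeT n ε'ᶜ l εᶜ := by
  obtain ⟨hne, hnd, hle, hmem⟩ := h
  refine ⟨hne, hnd, fun i => ?_, fun i => ?_⟩
  · change (!ε' i) ≤ !ε i
    have := hle i
    revert this
    cases ε i <;> cases ε' i <;> decide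
  · change (!ε' i) ≠ !ε i ↔ _
    rw [← hmem i]
    cases ε i <;> cases ε' i <;> decide

theorem CubeT.trueIdx_append_perm (h : CubeT n ε l ε') : (trueIdx ε ++ l).Perm (trueIdx ε') := by
  obtain ⟨-, hnd, hle, hmem⟩ := h
  have mem_l : ∀ i, i ∈ l ↔ ε i = false ∧ ε' i = true := fun i => by
    rw [← hmem i]
    have := hle i
    revert this
    cases ε i <;> cases ε' i <;> decide
  refine (List.perm_ext_iff_of_nodup (List.nodup_append.2 ⟨nodup_trueIdx, hnd, ?_⟩)
    nodup_trueIdx).2 fun i => ?_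
  · rintro i hi j hj rfl
    simp_all
  · have := hle i
    simp only [List.mem_append, mem_trueIdx, mem_l]
    revert this
    cases ε i <;> cases ε' i <;> decide

theorem cubeT_bot_trueIdx (h : ε ≠ ⊥) : CubeT n ⊥ (trueIdx ε) ε :=
  ⟨trueIdx_ne_nil h, nodup_trueIdx, fun _ => Bool.false_le _, fun i => by
    cases hi : ε i <;> simp [hi]⟩

theorem cubeT_trueIdx_compl_top (h : ε ≠ ⊤) : CubeT n ε (trueIdx εᶜ) ⊤ := by
  simpa using (cubeT_bot_trueIdx (ε := εᶜ) (by simpa using h)).compl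

theorem CubeT.eq_of_fin_one {ε ε' : Fin 1 → Bool} {l : List (Fin 1)} (h : CubeT 1 ε l ε') :
    ε = ⊥ ∧ l = [0] ∧ ε' = ⊤ := by
  obtain ⟨hne, hnd, hle, hmem⟩ := h
  have hl : l = [0] := by
    have hlen : l.length ≤ 1 := by simpa using hnd.length_le_card
    have hpos := List.length_pos_iff.2 hne
    obtain ⟨i, rfl⟩ := (List.length_eq_one_iff (l := l)).1 (by omega)
    rw [Subsingleton.elim i 0]
  have h0 := (hmem 0).2 (by simp [hl])
  have h0' := hle 0
  refine ⟨funext fun i => ?_, hl, funext fun i => ?_⟩ <;> rw [Subsingleton.elim i 0] <;>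
    revert h0 h0' <;> cases ε 0 <;> cases ε' 0 <;> decide

theorem exists_trueIdx_map_eq (l₁ l₂ : List L) :
    ∃ (N : ℕ) (w : Fin N → L) (ε : Fin N → Bool), N = l₁.length + l₂.length ∧
      (trueIdx ε).map w = l₁ ∧ (trueIdx εᶜ).map w = l₂ := by
  refine ⟨_, Fin.append l₁.get l₂.get, Fin.append (fun _ => true) (fun _ => false), ?_⟩
  rw [trueIdx, trueIdx, ← List.ofFn_id, List.ofFn_add, List.ofFn_eq_map, List.ofFn_eq_map]
  simp [List.filter_map, Function.comp_def, List.filter_append]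

end Cube

section Vertices

/-- `ν` may sit at the vertex `ε` of a cube whose diagonal is a transition from `α` to `β` along
the actions `w`. -/
def IsCubeVertex {n : ℕ} (T : S → List L → S → Prop) (w : Fin n → L) (α β : S)
    (ε : Fin n → Bool) (ν : S) : Prop :=
  (ε = ⊥ → ν = α) ∧ (ε = ⊤ → ν = β) ∧ (ε ≠ ⊥ → T α ((trueIdx ε).map w) ν) ∧
    (ε ≠ ⊤ → T ν ((trueIdx εᶜ).map w) β)

variable {T : S → List L → S → Prop} {n : ℕ} {w : Fin n → L} {α β : S}

theorem MultisetAxiom.map_perm (hmul : MultisetAxiom T) {l l' : List (Fin n)} (hp : l.Perm l')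
    (h : T α (l.map w) β) : T α (l'.map w) β :=
  hmul _ _ _ _ (hp.map w) h

theorem existsUnique_isCubeVertex [NeZero n] (hmul : MultisetAxiom T)
    (hUIS : UniqueIntermediate T) (hT : T α ((trueIdx ⊤).map w) β) (ε : Fin n → Bool) :
    ∃! ν, IsCubeVertex T w α β ε ν := by
  by_cases h₀ : ε = ⊥
  · subst h₀
    refine ⟨α, ⟨fun _ => rfl, fun h => absurd h.symm top_ne_bot, fun h => absurd rfl h,
      fun _ => by simpa using hT⟩, fun ν hν => hν.1 rfl⟩
  by_cases h₁ : ε = ⊤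
  · subst h₁
    refine ⟨β, ⟨fun h => absurd h top_ne_bot, fun _ => rfl, fun _ => hT, fun h => absurd rfl h⟩,
      fun ν hν => hν.2.1 rfl⟩
  have hsplit : T α ((trueIdx ε).map w ++ (trueIdx εᶜ).map w) β := by
    rw [← List.map_append]
    exact hmul.map_perm (cubeT_trueIdx_compl_top h₁).trueIdx_append_perm.symm hT
  obtain ⟨ν, hν, huniq⟩ := hUIS α β _ _ (by simpa using trueIdx_ne_nil h₀)
    (by simpa using trueIdx_ne_nil (compl_eq_bot.not.2 h₁)) hsplit
  exact ⟨ν, ⟨fun h => absurd h h₀, fun h => absurd h h₁, fun _ => hν.1, fun _ => hν.2⟩,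
    fun ν' hν' => huniq ν' ⟨hν'.2.2.1 h₀, hν'.2.2.2 h₁⟩⟩

/-- A cube transition `ε → ε'` is the middle part of the split of the diagonal into the actions
on the coordinates where `ε` is `1`, those where `ε < ε'`, and those where `ε'` is `0`; the
Coherence axiom then moves it between the vertices. -/
theorem cubeT_map_of_isCubeVertex (hmul : MultisetAxiom T) (hcoh : CoherenceAxiom T)
    {v : (Fin n → Bool) → S} (hv : ∀ ε, IsCubeVertex T w α β ε (v ε))
    {ε ε' : Fin n → Bool} {l : List (Fin n)} (h : CubeT n ε l ε') : T (v ε) (l.map w) (v ε') := by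
  have hle : ε ≤ ε' := h.2.2.1
  by_cases h₀ : ε = ⊥
  · subst h₀
    rw [(hv ⊥).1 rfl]
    exact hmul.map_perm (by simpa using h.trueIdx_append_perm.symm) ((hv ε').2.2.1 h.ne.symm)
  by_cases h₁ : ε' = ⊤
  · subst h₁
    rw [(hv ⊤).2.1 rfl]
    exact hmul.map_perm (by simpa using h.compl.trueIdx_append_perm.symm) ((hv ε).2.2.2 h.ne)
  have h₀' : ε' ≠ ⊥ := fun he => h₀ (le_bot_iff.1 (he ▸ hle))
  have h₁' : ε ≠ ⊤ := fun he => h₁ (top_le_iff.1 (he ▸ hle))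
  have hdiag : T α ((trueIdx ε ++ l ++ trueIdx ε'ᶜ).map w) β := by
    rw [← (hv ⊤).2.1 rfl]
    refine hmul.map_perm ?_ ((hv ⊤).2.2.1 fun he => h₀ (le_bot_iff.1 (he ▸ le_top)))
    exact (h.trueIdx_append_perm.append_right _).trans
      (cubeT_trueIdx_compl_top h₁).trueIdx_append_perm |>.symm
  rw [List.map_append, List.map_append] at hdiag
  refine hcoh α β (v ε) (v ε') _ _ _ (by simpa using trueIdx_ne_nil h₀) (by simpa using h.1)
    (by simpa using trueIdx_ne_nil (compl_eq_bot.not.2 h₁)) hdiag ((hv ε).2.2.1 h₀) ?_ ?_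
    ((hv ε').2.2.2 h₁)
  · rw [← List.map_append]
    exact hmul.map_perm (List.perm_append_comm.trans h.compl.trueIdx_append_perm).symm
      ((hv ε).2.2.2 h₁')
  · rw [← List.map_append]
    exact hmul.map_perm h.trueIdx_append_perm.symm ((hv ε').2.2.1 h₀')

end Vertices

namespace TransSys

variable {Λ : Type u}

@[ext]
theorem Hom.ext {X : TransSys.{u, u1, u2} Λ} {Y : TransSys.{u, u3, u4} Λ} {f g : X.Hom Y}
    (h₀ : f.f0 = g.f0) (hₐ : f.fa = g.fa) : f = g := by
  cases f; cases g; cases h₀; cases hₐ; rfl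

def Orthogonal (X : TransSys.{u, u5, u6} Λ) {A : TransSys.{u, u1, u2} Λ}
    {B : TransSys.{u, u3, u4} Λ} (g : A.Hom B) : Prop :=
  ∀ f : A.Hom X, ∃! h : B.Hom X, h.comp g = f

variable {X : TransSys.{u, u1, u2} Λ}

theorem csa1_iff_orthogonal_dToC : CSA1 X.μ X.T ↔ ∀ a, X.Orthogonal (dToC a) := by
  constructor
  · intro hCSA a f
    have ht (b : Bool) : X.T (f.f0 false) [f.fa b] (f.f0 true) :=
      f.map false [b] true ⟨rfl, rfl, by cases b <;> simp⟩
    have hu : f.fa false = f.fa true :=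
      hCSA _ _ _ _ (ht false) (ht true) ((f.label false).trans (f.label true).symm)
    refine ⟨⟨fun ε => f.f0 (ε 0), fun _ => f.fa false, fun _ => f.label false, ?_⟩, ?_, ?_⟩
    · rintro ε l ε' h
      obtain ⟨rfl, rfl, rfl⟩ := h.eq_of_fin_one
      exact ht false
    · ext b
      · rfl
      · cases b
        exacts [rfl, hu]
    · intro g hg
      refine Hom.ext (funext fun ε => ?_) (funext fun i => ?_)
      · calc g.f0 ε = g.f0 fun _ => ε 0 := congrArg g.f0 (funext fun i => by
              rw [Fin.fin_one_eq_zero i])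
          _ = f.f0 (ε 0) := congrFun (congrArg Hom.f0 hg) (ε 0)
      · rw [Fin.fin_one_eq_zero i]
        exact congrFun (congrArg Hom.fa hg) false
  · intro horth α β u u' h h' hμ
    obtain ⟨g, hg, -⟩ := horth (X.μ u)
      { f0 := fun b => if b then β else α
        fa := fun b => if b then u' else u
        label := by intro b; cases b <;> simp [hμ]
        map := by rintro x l y ⟨rfl, rfl, rfl | rfl⟩ <;> simpa }
    exact (congrFun (congrArg Hom.fa hg) false).symm.trans (congrFun (congrArg Hom.fa hg) true)

variable {n : ℕ} {a : Fin n → Λ}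

theorem Hom.isCubeVertex (g : (cube n a).Hom X) (ε : Fin n → Bool) :
    IsCubeVertex X.T g.fa (g.f0 ⊥) (g.f0 ⊤) ε (g.f0 ε) :=
  ⟨fun h => h ▸ rfl, fun h => h ▸ rfl, fun h => g.map _ _ _ (cubeT_bot_trueIdx h),
    fun h => g.map _ _ _ (cubeT_trueIdx_compl_top h)⟩

def Hom.ofCubeVertices (hmul : MultisetAxiom X.T) (hcoh : CoherenceAxiom X.T) (a : Fin n → Λ)
    (w : Fin n → X.L) (hw : ∀ i, X.μ (w i) = a i) {α β : X.S} (v : (Fin n → Bool) → X.S)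
    (hv : ∀ ε, IsCubeVertex X.T w α β ε (v ε)) : (cube n a).Hom X where
  f0 := v
  fa := w
  label := hw
  map _ _ _ := cubeT_map_of_isCubeVertex hmul hcoh hv

theorem Hom.comp_extIncl_eq_iff (g : (cube n a).Hom X) (f : (cubeExt n a).Hom X) :
    g.comp (extIncl n a) = f ↔
      g.fa = f.fa ∧ g.f0 ⊥ = f.f0 ⟨⊥, Or.inl rfl⟩ ∧ g.f0 ⊤ = f.f0 ⟨⊤, Or.inr rfl⟩ := by
  constructor
  · rintro rfl
    exact ⟨rfl, rfl, rfl⟩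
  · rintro ⟨hₐ, h₀, h₁⟩
    ext x
    · rcases x with ⟨_, rfl | rfl⟩
      exacts [h₀, h₁]
    · exact congrFun hₐ x

theorem Hom.map_diagonal [NeZero n] (f : (cubeExt n a).Hom X) :
    X.T (f.f0 ⟨⊥, Or.inl rfl⟩) ((trueIdx ⊤).map f.fa) (f.f0 ⟨⊤, Or.inr rfl⟩) :=
  f.map _ _ _ ⟨rfl, rfl, trueIdx_ne_nil top_ne_bot, nodup_trueIdx, by simp⟩

def Hom.ofDiagonal [NeZero n] (hmul : MultisetAxiom X.T) (w : Fin n → X.L) {α β : X.S}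
    (hT : X.T α ((trueIdx ⊤).map w) β) : (cubeExt n (X.μ ∘ w)).Hom X where
  f0 x := if x.1 = ⊥ then α else β
  fa := w
  label _ := rfl
  map := by
    rintro x l y ⟨hx, hy, -, hnd, hall⟩
    have hx' : x.1 = ⊥ := hx
    have hy' : y.1 ≠ ⊥ := by rw [hy]; exact top_ne_bot
    change X.T (if x.1 = ⊥ then α else β) (l.map w) (if y.1 = ⊥ then α else β)
    rw [if_pos hx', if_neg hy']
    exact hmul.map_perm ((List.perm_ext_iff_of_nodup nodup_trueIdx hnd).2 (by simp [hall])) hT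

theorem Hom.ofDiagonal_f0_bot [NeZero n] (hmul : MultisetAxiom X.T) (w : Fin n → X.L) {α β : X.S}
    (hT : X.T α ((trueIdx ⊤).map w) β) : (Hom.ofDiagonal hmul w hT).f0 ⟨⊥, Or.inl rfl⟩ = α :=
  if_pos rfl

theorem Hom.ofDiagonal_f0_top [NeZero n] (hmul : MultisetAxiom X.T) (w : Fin n → X.L) {α β : X.S}
    (hT : X.T α ((trueIdx ⊤).map w) β) : (Hom.ofDiagonal hmul w hT).f0 ⟨⊤, Or.inr rfl⟩ = β :=
  if_neg top_ne_bot

theorem orthogonal_extIncl [NeZero n] (hmul : MultisetAxiom X.T) (hcoh : CoherenceAxiom X.T)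
    (hUIS : UniqueIntermediate X.T) (a : Fin n → Λ) : X.Orthogonal (extIncl n a) := by
  intro f
  have hvertex := existsUnique_isCubeVertex hmul hUIS f.map_diagonal
  choose v hv using fun ε => (hvertex ε).exists
  refine ⟨.ofCubeVertices hmul hcoh a f.fa f.label v hv,
    (Hom.comp_extIncl_eq_iff _ f).2 ⟨rfl, (hv ⊥).1 rfl, (hv ⊤).2.1 rfl⟩, fun g hg => ?_⟩
  obtain ⟨hₐ, h₀, h₁⟩ := (g.comp_extIncl_eq_iff f).1 hg
  ext ε
  · exact (hvertex ε).unique (hₐ ▸ h₀ ▸ h₁ ▸ g.isCubeVertex ε) (hv ε)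
  · exact congrFun hₐ ε

theorem uniqueIntermediate_of_orthogonal (hmul : MultisetAxiom X.T) (hcoh : CoherenceAxiom X.T)
    (horth : ∀ n, 2 ≤ n → ∀ a : Fin n → Λ, X.Orthogonal (extIncl n a)) :
    UniqueIntermediate X.T := by
  intro α β l₁ l₂ hl₁ hl₂ hT
  obtain ⟨N, w, ε, hN, rfl, rfl⟩ := exists_trueIdx_map_eq l₁ l₂
  have hN₂ : 2 ≤ N := by
    have := List.length_pos_iff.2 hl₁
    have := List.length_pos_iff.2 hl₂
    omega
  have : NeZero N := ⟨by omega⟩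
  have hε₀ : ε ≠ ⊥ := by rintro rfl; simp at hl₁
  have hε₁ : ε ≠ ⊤ := by rintro rfl; simp at hl₂
  rw [← List.map_append] at hT
  have hdiag := hmul.map_perm (cubeT_trueIdx_compl_top hε₁).trueIdx_append_perm hT
  obtain ⟨g, hg, hg_uniq⟩ := horth N hN₂ (X.μ ∘ w) (Hom.ofDiagonal hmul w hdiag)
  obtain ⟨hₐ, h₀, h₁⟩ := (g.comp_extIncl_eq_iff _).1 hg
  have hv (ε' : Fin N → Bool) : IsCubeVertex X.T w α β ε' (g.f0 ε') := by
    have := g.isCubeVertex ε'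
    rw [hₐ, h₀, h₁, Hom.ofDiagonal_f0_bot, Hom.ofDiagonal_f0_top] at this
    exact this
  refine ⟨g.f0 ε, ⟨(hv ε).2.2.1 hε₀, (hv ε).2.2.2 hε₁⟩, fun ν hν => ?_⟩
  -- `g` with its vertex `ε` moved to `ν` is again a lift of the diagonal, hence equal to `g`
  have hv' : ∀ ε', IsCubeVertex X.T w α β ε' (Function.update g.f0 ε ν ε') :=
    (Function.forall_update_iff g.f0 fun ε' ν' => IsCubeVertex X.T w α β ε' ν').2
      ⟨⟨fun h => absurd h hε₀, fun h => absurd h hε₁, fun _ => hν.1, fun _ => hν.2⟩,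
        fun ε' _ => hv ε'⟩
  have hg' := hg_uniq (.ofCubeVertices hmul hcoh _ w (fun _ => rfl) _ hv')
    ((Hom.comp_extIncl_eq_iff _ _).2 ⟨rfl, ((hv' ⊥).1 rfl).trans (Hom.ofDiagonal_f0_bot ..).symm,
      ((hv' ⊤).2.1 rfl).trans (Hom.ofDiagonal_f0_top ..).symm⟩)
  exact (Function.update_self ε ν g.f0).symm.trans (congrArg (fun g => g.f0 ε) hg')

theorem uniqueIntermediate_iff_orthogonal_extIncl (hmul : MultisetAxiom X.T)
    (hcoh : CoherenceAxiom X.T) :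
    UniqueIntermediate X.T ↔ ∀ n, 2 ≤ n → ∀ a : Fin n → Λ, X.Orthogonal (extIncl n a) :=
  ⟨fun hUIS n hn a => have : NeZero n := ⟨by omega⟩; orthogonal_extIncl hmul hcoh hUIS a,
    uniqueIntermediate_of_orthogonal hmul hcoh⟩

end TransSys

open TransSys in
theorem hdts_iff_orthogonal_general {Λ : Type u} (X : TransSys.{u, u1, u2} Λ)
    (hmul : MultisetAxiom X.T) (hcoh : CoherenceAxiom X.T) :
    (CSA1 X.μ X.T ∧ UniqueIntermediate X.T) ↔
      ((∀ a : Λ, ∀ f : (dSys a).Hom X,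
          ∃! g : (cube 1 (fun _ => a)).Hom X, g.comp (dToC a) = f) ∧
        ∀ (n : ℕ), 2 ≤ n → ∀ (a : Fin n → Λ), ∀ f : (cubeExt n a).Hom X,
          ∃! g : (cube n a).Hom X, g.comp (extIncl n a) = f) :=
  and_congr csa1_iff_orthogonal_dToC (uniqueIntermediate_iff_orthogonal_extIncl hmul hcoh)

/-- A weak higher dimensional transition system `X` is a higher dimensional
transition system (i.e. satisfies CSA1 and the Unique intermediate state axiom)
if and only if it is orthogonal to the canonical morphisms `D[a] → C_1[a]` for
all `a ∈ Σ` and to the inclusions `C_n[a_1,…,a_n]^ext ⊆ C_n[a_1,…,a_n]` for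
all `n ≥ 2` and `a_1,…,a_n ∈ Σ`: orthogonality to `g : A → B` means that
every morphism `A → X` factors uniquely through `g`. -/
theorem hdts_iff_orthogonal {Λ : Type u} (X : TransSys.{u, u1, u2} Λ)
    (hne : ∀ α l β, X.T α l β → l ≠ [])
    (hmul : MultisetAxiom X.T) (hcoh : CoherenceAxiom X.T) :
    (CSA1 X.μ X.T ∧ UniqueIntermediate X.T) ↔
      ((∀ a : Λ, ∀ f : (dSys a).Hom X,
          ∃! g : (cube 1 (fun _ => a)).Hom X, g.comp (dToC a) = f) ∧
        ∀ (n : ℕ), 2 ≤ n → ∀ (a : Fin n → Λ), ∀ f : (cubeExt n a).Hom X,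
          ∃! g : (cube n a).Hom X, g.comp (extIncl n a) = f) :=
  hdts_iff_orthogonal_general X hmul hcoh
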